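/- Let f(x) = 1 + x log₂ x + (1/2 − x) log₂(1/2 − x) and g(x) = 1 + (3/4 − x) log₂(3/4 − x) + (1/4 + x) log₂(1/4 + x) for x ∈ (0, 1/2), x ≠ 1/4. Then lim_{x → 1/4} f(x)/g(x) = 2. -/

import Mathlib

noncomputable def fNum (x : ℝ) : ℝ :=
  1 + x * Real.logb 2 x + (1/2 - x) * Real.logb 2 (1/2 - x)

noncomputable def gDen (x : ℝ) : ℝ :=
  1 + (3/4 - x) * Real.logb 2 (3/4 - x) + (1/4 + x) * Real.logb 2 (1/4 + x)

/-!
Both `fNum` and `gDen` have the form `1 + φ(c - x) + φ(d + x)` with `φ y = y log₂ y` and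
`c - 1/4 = d + 1/4`, so at `x = 1/4` the function and its derivative `log₂(d + x) - log₂(c - x)`
vanish. After one application of L'Hôpital's rule the quotient of first derivatives is the
quotient of their difference quotients at `1/4`, which tends to the ratio of second derivatives
`(4 + 4) / (2 + 2) = 2` (the factors `1 / log 2` cancel).
-/

open Real Filter Topology

theorem tendsto_div_nhdsNE_of_hasDerivAt_of_hasDerivAt {f g f' g' : ℝ → ℝ} {a f'' g'' : ℝ}
    (hf : ∀ᶠ x in 𝓝 a, HasDerivAt f (f' x) x) (hg : ∀ᶠ x in 𝓝 a, HasDerivAt g (g' x) x)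
    (hf' : HasDerivAt f' f'' a) (hg' : HasDerivAt g' g'' a)
    (hfa : f a = 0) (hga : g a = 0) (hf'a : f' a = 0) (hg'a : g' a = 0) (hg'' : g'' ≠ 0) :
    Tendsto (fun x => f x / g x) (𝓝[≠] a) (𝓝 (f'' / g'')) := by
  have hf'_slope := hasDerivAt_iff_tendsto_slope.mp hf'
  have hg'_slope := hasDerivAt_iff_tendsto_slope.mp hg'
  have hslope : ∀ᶠ x in 𝓝[≠] a, slope f' a x / slope g' a x = f' x / g' x := by
    filter_upwards [self_mem_nhdsWithin] with x hx
    rw [slope_def_field, slope_def_field, hf'a, hg'a, sub_zero, sub_zero,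
      div_div_div_cancel_right₀ (sub_ne_zero.mpr hx)]
  have hg'_ne : ∀ᶠ x in 𝓝[≠] a, g' x ≠ 0 := by
    filter_upwards [self_mem_nhdsWithin, hg'_slope.eventually_ne hg''] with x hx hne
    rwa [slope_def_field, hg'a, sub_zero, div_ne_zero_iff,
      and_iff_left (sub_ne_zero.mpr hx)] at hne
  refine HasDerivAt.lhopital_zero_nhdsNE (eventually_nhdsWithin_of_eventually_nhds hf)
    (eventually_nhdsWithin_of_eventually_nhds hg) hg'_ne ?_ ?_
    ((hf'_slope.div hg'_slope hg'').congr' hslope)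
  · simpa [hfa] using hf.self_of_nhds.continuousAt.continuousWithinAt.tendsto
  · simpa [hga] using hg.self_of_nhds.continuousAt.continuousWithinAt.tendsto

noncomputable def oneSubEntropy (c d x : ℝ) : ℝ :=
  1 + (c - x) * logb 2 (c - x) + (d + x) * logb 2 (d + x)

theorem fNum_eq_oneSubEntropy : fNum = oneSubEntropy (1/2) 0 := by
  funext x
  rw [fNum, oneSubEntropy, zero_add, add_assoc, add_assoc, add_comm (x * _)]

theorem gDen_eq_oneSubEntropy : gDen = oneSubEntropy (3/4) (1/4) := rfl

theorem hasDerivAt_mul_logb (b : ℝ) {y : ℝ} (hy : y ≠ 0) :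
    HasDerivAt (fun y => y * logb b y) ((log y + 1) / log b) y := by
  simpa only [logb, mul_div_assoc] using (hasDerivAt_mul_log hy).div_const (log b)

theorem hasDerivAt_oneSubEntropy {c d x : ℝ} (hc : c - x ≠ 0) (hd : d + x ≠ 0) :
    HasDerivAt (oneSubEntropy c d) ((log (d + x) - log (c - x)) / log 2) x := by
  have hsub := (hasDerivAt_mul_logb 2 hc).comp x ((hasDerivAt_id x).const_sub c)
  have hadd := (hasDerivAt_mul_logb 2 hd).comp x ((hasDerivAt_id x).const_add d)
  refine (((hasDerivAt_const x 1).add hsub).add hadd).congr_deriv ?_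
  ring

theorem eventually_hasDerivAt_oneSubEntropy {c d a : ℝ} (hc : c - a ≠ 0) (hd : d + a ≠ 0) :
    ∀ᶠ x in 𝓝 a, HasDerivAt (oneSubEntropy c d) ((log (d + x) - log (c - x)) / log 2) x := by
  filter_upwards [(continuous_const.sub continuous_id).continuousAt.eventually_ne hc,
    (continuous_const.add continuous_id).continuousAt.eventually_ne hd] with x hcx hdx
  exact hasDerivAt_oneSubEntropy hcx hdx

theorem hasDerivAt_log_add_sub_log_sub {c d x : ℝ} (hc : c - x ≠ 0) (hd : d + x ≠ 0) :
    HasDerivAt (fun y => (log (d + y) - log (c - y)) / log 2)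
      (((d + x)⁻¹ + (c - x)⁻¹) / log 2) x := by
  have hsub := (hasDerivAt_log hc).comp x ((hasDerivAt_id x).const_sub c)
  have hadd := (hasDerivAt_log hd).comp x ((hasDerivAt_id x).const_add d)
  refine ((hadd.sub hsub).div_const (log 2)).congr_deriv ?_
  ring

theorem oneSubEntropy_of_sub_eq_add {c d x m : ℝ} (hc : c - x = m) (hd : d + x = m) :
    oneSubEntropy c d x = 1 + 2 * m * logb 2 m := by
  rw [oneSubEntropy, hc, hd]; ring

theorem oneSubEntropy_half_zero_quarter : oneSubEntropy (1/2) 0 (1/4) = 0 := by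
  rw [oneSubEntropy_of_sub_eq_add (m := 1/4) (by norm_num) (by norm_num), one_div, logb_inv,
    show (4 : ℝ) = 2 ^ 2 by norm_num, logb_pow, logb_self_eq_one one_lt_two]
  norm_num

theorem oneSubEntropy_threeQuarters_quarter_quarter : oneSubEntropy (3/4) (1/4) (1/4) = 0 := by
  rw [oneSubEntropy_of_sub_eq_add (m := 1/2) (by norm_num) (by norm_num), one_div, logb_inv,
    logb_self_eq_one one_lt_two]
  norm_num

/-- The entanglement-assistance ratio for covariant qubit Pauli channels along the line
`p₃ = 1/2 − p₀` tends to `2` as `x → 1/4`. -/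
theorem tendsto_fNum_div_gDen :
    Filter.Tendsto (fun x : ℝ => fNum x / gDen x)
      (nhdsWithin (1/4 : ℝ) {(1/4 : ℝ)}ᶜ) (nhds 2) := by
  have key := tendsto_div_nhdsNE_of_hasDerivAt_of_hasDerivAt
    (eventually_hasDerivAt_oneSubEntropy (c := 1/2) (d := 0) (a := 1/4)
      (by norm_num) (by norm_num))
    (eventually_hasDerivAt_oneSubEntropy (c := 3/4) (d := 1/4) (by norm_num) (by norm_num))
    (hasDerivAt_log_add_sub_log_sub (by norm_num) (by norm_num))
    (hasDerivAt_log_add_sub_log_sub (by norm_num) (by norm_num))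
    oneSubEntropy_half_zero_quarter oneSubEntropy_threeQuarters_quarter_quarter
    (by norm_num) (by norm_num) (by positivity)
  rw [fNum_eq_oneSubEntropy, gDen_eq_oneSubEntropy]
  convert key using 2
  field_simp
  norm_num
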